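/- arXiv:2011.08369 — 3 statements merged into one kernel-verified Lean document; each statement's English description precedes it below -/
import Mathlib

section
/- For every ξ′ = (ξ₁,ξ₂) ∈ ℝ², the four vectors h₊,₁(ξ′), h₊,₂(ξ′), h₋,₁(ξ′), h₋,₂(ξ′) in ℂ⁴ are pairwise orthogonal with respect to the inner product ⟨u,v⟩ = Σᵢ uᵢ·conj(vᵢ), and each has squared norm ‖h±,ⱼ(ξ′)‖² = 2|ξ′|². -/
open Matrix Complex

noncomputable section

/-- Pauli matrices -/
def σ1 : Matrix (Fin 2) (Fin 2) ℂ := !![0, 1; 1, 0]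
def σ2 : Matrix (Fin 2) (Fin 2) ℂ := !![0, -I; I, 0]
def σ3 : Matrix (Fin 2) (Fin 2) ℂ := !![1, 0; 0, -1]

/-- `Λ₊(ξ′) = ξ₁σ₁ + ξ₂σ₂ + i|ξ′|σ₃`. -/
def Λp (ξ₁ ξ₂ : ℝ) : Matrix (Fin 2) (Fin 2) ℂ :=
  (ξ₁ : ℂ) • σ1 + (ξ₂ : ℂ) • σ2 + (I * (Real.sqrt (ξ₁ ^ 2 + ξ₂ ^ 2) : ℝ)) • σ3

/-- `Λ₋(ξ′) = ξ₁σ₁ + ξ₂σ₂ − i|ξ′|σ₃`. -/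
def Λm (ξ₁ ξ₂ : ℝ) : Matrix (Fin 2) (Fin 2) ℂ :=
  (ξ₁ : ℂ) • σ1 + (ξ₂ : ℂ) • σ2 - (I * (Real.sqrt (ξ₁ ^ 2 + ξ₂ ^ 2) : ℝ)) • σ3

/-- `e = (1,0) ∈ ℂ²`. -/
def e : Fin 2 → ℂ := ![1, 0]

/-- `h₊,₁(ξ′) = (Λ₊(ξ′)e, 0) ∈ ℂ⁴` (upper ℂ² component, lower ℂ² component). -/
def hp1 (ξ₁ ξ₂ : ℝ) : (Fin 2 ⊕ Fin 2) → ℂ := Sum.elim ((Λp ξ₁ ξ₂).mulVec e) 0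
/-- `h₊,₂(ξ′) = (0, Λ₊(ξ′)e)`. -/
def hp2 (ξ₁ ξ₂ : ℝ) : (Fin 2 ⊕ Fin 2) → ℂ := Sum.elim 0 ((Λp ξ₁ ξ₂).mulVec e)
/-- `h₋,₁(ξ′) = (Λ₋(ξ′)e, 0)`. -/
def hm1 (ξ₁ ξ₂ : ℝ) : (Fin 2 ⊕ Fin 2) → ℂ := Sum.elim ((Λm ξ₁ ξ₂).mulVec e) 0
/-- `h₋,₂(ξ′) = (0, Λ₋(ξ′)e)`. -/
def hm2 (ξ₁ ξ₂ : ℝ) : (Fin 2 ⊕ Fin 2) → ℂ := Sum.elim 0 ((Λm ξ₁ ξ₂).mulVec e)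

/-! Both columns `Λ±(ξ′)e = (±i|ξ′|, ξ₁ + iξ₂)` have the same lower entry, so the inner product
of the columns with upper entries `is` and `it` is `st + |ξ′|²`: `2|ξ′|²` for equal signs, `0` for
opposite ones. Vectors in different `ℂ²` blocks of `ℂ⁴` are trivially orthogonal. -/

lemma Λp_mulVec_e (ξ₁ ξ₂ : ℝ) :
    Λp ξ₁ ξ₂ *ᵥ e = ![I * (√(ξ₁ ^ 2 + ξ₂ ^ 2) : ℝ), ξ₁ + ξ₂ * I] := by
  ext k; fin_cases k <;> simp [Λp, σ1, σ2, σ3, e, mulVec, dotProduct]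

lemma Λm_mulVec_e (ξ₁ ξ₂ : ℝ) :
    Λm ξ₁ ξ₂ *ᵥ e = ![I * (-√(ξ₁ ^ 2 + ξ₂ ^ 2) : ℝ), ξ₁ + ξ₂ * I] := by
  ext k; fin_cases k <;> simp [Λm, σ1, σ2, σ3, e, mulVec, dotProduct]

lemma vecCons_I_mul_dotProduct_star (s t ξ₁ ξ₂ : ℝ) :
    ![I * s, ξ₁ + ξ₂ * I] ⬝ᵥ star ![I * (t : ℂ), ξ₁ + ξ₂ * I] =
      ((s * t + ξ₁ ^ 2 + ξ₂ ^ 2 : ℝ) : ℂ) := by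
  simp only [dotProduct, Fin.sum_univ_two, Pi.star_apply, RCLike.star_def, Fin.isValue,
    cons_val_zero, cons_val_one, cons_val_fin_one, map_mul, map_add, conj_I, conj_ofReal]
  push_cast
  linear_combination (-(s * t) - ξ₂ ^ 2 : ℂ) * I_sq

section

variable (ξ₁ ξ₂ : ℝ)

lemma sqrt_mul_self_sum_sq : √(ξ₁ ^ 2 + ξ₂ ^ 2) * √(ξ₁ ^ 2 + ξ₂ ^ 2) = ξ₁ ^ 2 + ξ₂ ^ 2 :=
  Real.mul_self_sqrt (by positivity)

lemma Λp_e_dotProduct_star_Λp_e :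
    Λp ξ₁ ξ₂ *ᵥ e ⬝ᵥ star (Λp ξ₁ ξ₂ *ᵥ e) = ((2 * (ξ₁ ^ 2 + ξ₂ ^ 2) : ℝ) : ℂ) := by
  rw [Λp_mulVec_e, vecCons_I_mul_dotProduct_star, sqrt_mul_self_sum_sq]
  ring_nf

lemma Λm_e_dotProduct_star_Λm_e :
    Λm ξ₁ ξ₂ *ᵥ e ⬝ᵥ star (Λm ξ₁ ξ₂ *ᵥ e) = ((2 * (ξ₁ ^ 2 + ξ₂ ^ 2) : ℝ) : ℂ) := by
  rw [Λm_mulVec_e, vecCons_I_mul_dotProduct_star, neg_mul_neg, sqrt_mul_self_sum_sq]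
  ring_nf

lemma Λp_e_dotProduct_star_Λm_e : Λp ξ₁ ξ₂ *ᵥ e ⬝ᵥ star (Λm ξ₁ ξ₂ *ᵥ e) = 0 := by
  rw [Λp_mulVec_e, Λm_mulVec_e, vecCons_I_mul_dotProduct_star, mul_neg, sqrt_mul_self_sum_sq]
  simp

lemma Λm_e_dotProduct_star_Λp_e : Λm ξ₁ ξ₂ *ᵥ e ⬝ᵥ star (Λp ξ₁ ξ₂ *ᵥ e) = 0 := by
  rw [Λp_mulVec_e, Λm_mulVec_e, vecCons_I_mul_dotProduct_star, neg_mul, sqrt_mul_self_sum_sq]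
  simp

end

lemma sum_mul_starRingEnd_eq_dotProduct_star {R ι : Type*} [CommSemiring R] [StarRing R]
    [Fintype ι] (x y : ι → R) :
    ∑ k, x k * starRingEnd R (y k) = x ⬝ᵥ star y := rfl

lemma sumElim_dotProduct_star_sumElim {R ι κ : Type*} [NonUnitalNonAssocSemiring R] [Star R]
    [Fintype ι] [Fintype κ] (u v : ι → R) (x y : κ → R) :
    Sum.elim u x ⬝ᵥ star (Sum.elim v y) = u ⬝ᵥ star v + x ⬝ᵥ star y := by
  rw [Function.star_sumElim, sumElim_dotProduct_sumElim]

/-- the four vectors `h₊,₁, h₊,₂, h₋,₁, h₋,₂` are pairwise orthogonal in `ℂ⁴`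
(w.r.t. `⟨u,v⟩ = Σᵢ uᵢ · conj(vᵢ)`) and each has squared norm `2|ξ′|²`. -/
theorem h_orthogonal_and_norm (ξ₁ ξ₂ : ℝ) :
    (∀ i j : Fin 4, i ≠ j →
      ∑ k, (![hp1 ξ₁ ξ₂, hp2 ξ₁ ξ₂, hm1 ξ₁ ξ₂, hm2 ξ₁ ξ₂] i k) *
        (starRingEnd ℂ) (![hp1 ξ₁ ξ₂, hp2 ξ₁ ξ₂, hm1 ξ₁ ξ₂, hm2 ξ₁ ξ₂] j k) = 0) ∧
    (∀ i : Fin 4,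
      ∑ k, (![hp1 ξ₁ ξ₂, hp2 ξ₁ ξ₂, hm1 ξ₁ ξ₂, hm2 ξ₁ ξ₂] i k) *
        (starRingEnd ℂ) (![hp1 ξ₁ ξ₂, hp2 ξ₁ ξ₂, hm1 ξ₁ ξ₂, hm2 ξ₁ ξ₂] i k)
        = ((2 * (ξ₁ ^ 2 + ξ₂ ^ 2) : ℝ) : ℂ)) := by
  simp only [sum_mul_starRingEnd_eq_dotProduct_star]
  refine ⟨fun i j hij => ?_, fun i => ?_⟩
  · fin_cases i <;> fin_cases j <;> first
      | exact absurd rfl hij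
      | simp only [Fin.zero_eta, Fin.mk_one, Fin.reduceFinMk, Fin.isValue, cons_val_zero,
          cons_val_one, cons_val, hp1, hp2, hm1, hm2, sumElim_dotProduct_star_sumElim, star_zero,
          zero_dotProduct, dotProduct_zero, add_zero, Λp_e_dotProduct_star_Λm_e,
          Λm_e_dotProduct_star_Λp_e]
  · fin_cases i <;>
      simp only [Fin.zero_eta, Fin.mk_one, Fin.reduceFinMk, Fin.isValue, cons_val_zero,
        cons_val_one, cons_val, hp1, hp2, hm1, hm2, sumElim_dotProduct_star_sumElim, star_zero,
        dotProduct_zero, add_zero, zero_add, Λp_e_dotProduct_star_Λp_e, Λm_e_dotProduct_star_Λm_e]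
end
end

section
/- For every ξ′ = (ξ₁,ξ₂) ∈ ℝ² and each j ∈ {1,2}, the ℂ⁴-valued functions ψ₊,ⱼ(z) = h₊,ⱼ(ξ′)·exp(|ξ′|z) and ψ₋,ⱼ(z) = h₋,ⱼ(ξ′)·exp(−|ξ′|z) satisfy, for every z ∈ ℝ, the first-order system (ξ₁α₁ + ξ₂α₂)ψ(z) + i·α₃·(dψ/dz)(z) = 0. -/
open Matrix Complex

noncomputable section

/-- Dirac matrices, as 4×4 block matrices indexed by `Fin 2 ⊕ Fin 2`. -/
def α1 : Matrix (Fin 2 ⊕ Fin 2) (Fin 2 ⊕ Fin 2) ℂ := Matrix.fromBlocks 0 σ1 σ1 0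
def α2 : Matrix (Fin 2 ⊕ Fin 2) (Fin 2 ⊕ Fin 2) ℂ := Matrix.fromBlocks 0 σ2 σ2 0
def α3 : Matrix (Fin 2 ⊕ Fin 2) (Fin 2 ⊕ Fin 2) ℂ := Matrix.fromBlocks 0 σ3 σ3 0

/-- `h₊,ⱼ(ξ′)`, `j = 1, 2`. -/
def hp (ξ₁ ξ₂ : ℝ) : Fin 2 → ((Fin 2 ⊕ Fin 2) → ℂ) :=
  ![Sum.elim ((Λp ξ₁ ξ₂).mulVec e) 0, Sum.elim 0 ((Λp ξ₁ ξ₂).mulVec e)]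

/-- `h₋,ⱼ(ξ′)`, `j = 1, 2`. -/
def hm (ξ₁ ξ₂ : ℝ) : Fin 2 → ((Fin 2 ⊕ Fin 2) → ℂ) :=
  ![Sum.elim ((Λm ξ₁ ξ₂).mulVec e) 0, Sum.elim 0 ((Λm ξ₁ ξ₂).mulVec e)]

/-!
Substituting `ψ(z) = exp(λz) • h` turns the system into the algebraic condition
`(ξ₁α₁ + ξ₂α₂ + iλα₃) h = 0`. For `λ = ±|ξ′|` this matrix is the off-diagonal block matrix with
both blocks equal to `Λ±(ξ′)`, and by the Pauli anticommutation relations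
`Λ±(ξ′)² = (ξ₁² + ξ₂² - |ξ′|²) • 1 = 0`. Each `h±,ⱼ` has a single nonzero block, which lies in the
range of `Λ±(ξ′)`, so it is annihilated.
-/
theorem deriv_exp_mul_smul {E : Type*} [NormedAddCommGroup E] [NormedSpace ℝ E]
    (c : ℝ) (v : E) (z : ℝ) :
    deriv (fun t : ℝ => Real.exp (c * t) • v) z = (c * Real.exp (c * z)) • v := by
  have hexp : HasDerivAt (fun t : ℝ => Real.exp (c * t)) (c * Real.exp (c * z)) z := by
    simpa [mul_comm] using ((hasDerivAt_id z).const_mul c).exp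
  exact (hexp.smul_const v).deriv

theorem mulVec_smul_add_I_smul_mulVec_smul {n : Type*} [Fintype n] (M N : Matrix n n ℂ)
    (a c : ℝ) (v : n → ℂ) :
    M *ᵥ (a • v) + I • N *ᵥ ((c * a) • v) = (a : ℂ) • ((M + (I * c) • N) *ᵥ v) := by
  simp only [← Complex.coe_smul, Matrix.mulVec_smul, Matrix.add_mulVec, Matrix.smul_mulVec,
    ofReal_mul, smul_add, smul_smul]
  ring_nf

theorem pauli_combination_mul_self (a b c : ℂ) :
    (a • σ1 + b • σ2 + c • σ3) * (a • σ1 + b • σ2 + c • σ3) = (a ^ 2 + b ^ 2 + c ^ 2) • 1 := by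
  ext i j
  fin_cases i <;> fin_cases j <;>
    simp [σ1, σ2, σ3, Matrix.mul_apply, Fin.sum_univ_two] <;> ring_nf <;> simp [I_sq]

theorem dirac_combination_eq_fromBlocks (a b c : ℂ) :
    a • α1 + b • α2 + c • α3 =
      fromBlocks 0 (a • σ1 + b • σ2 + c • σ3) (a • σ1 + b • σ2 + c • σ3) 0 := by
  simp only [α1, α2, α3, fromBlocks_smul, fromBlocks_add, smul_zero, add_zero]

theorem fromBlocks_zero_mulVec_sum_elim_eq_zero {n R : Type*} [Fintype n] [NonUnitalSemiring R]
    {S : Matrix n n R} (hS : S * S = 0) (u w : n → R) :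
    fromBlocks 0 S S 0 *ᵥ Sum.elim (S *ᵥ u) (S *ᵥ w) = 0 := by
  simp [fromBlocks_mulVec, Matrix.mulVec_mulVec, hS]

theorem ofReal_sqrt_sum_sq_sq (ξ₁ ξ₂ : ℝ) :
    ((Real.sqrt (ξ₁ ^ 2 + ξ₂ ^ 2) : ℝ) : ℂ) ^ 2 = (ξ₁ : ℂ) ^ 2 + (ξ₂ : ℂ) ^ 2 := by
  rw [← ofReal_pow, Real.sq_sqrt (by positivity)]
  push_cast
  ring

theorem Λp_mul_self (ξ₁ ξ₂ : ℝ) : Λp ξ₁ ξ₂ * Λp ξ₁ ξ₂ = 0 := by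
  rw [Λp, pauli_combination_mul_self, mul_pow, I_sq, ofReal_sqrt_sum_sq_sq]
  simp

theorem Λm_eq (ξ₁ ξ₂ : ℝ) :
    Λm ξ₁ ξ₂ =
      (ξ₁ : ℂ) • σ1 + (ξ₂ : ℂ) • σ2 + (I * ((-Real.sqrt (ξ₁ ^ 2 + ξ₂ ^ 2) : ℝ) : ℂ)) • σ3 := by
  rw [Λm, ofReal_neg, mul_neg, neg_smul, sub_eq_add_neg]

theorem Λm_mul_self (ξ₁ ξ₂ : ℝ) : Λm ξ₁ ξ₂ * Λm ξ₁ ξ₂ = 0 := by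
  rw [Λm_eq, pauli_combination_mul_self, mul_pow, I_sq, ofReal_neg, neg_sq, ofReal_sqrt_sum_sq_sq]
  simp

theorem fromBlocks_Λp_mulVec_hp (ξ₁ ξ₂ : ℝ) (j : Fin 2) :
    fromBlocks 0 (Λp ξ₁ ξ₂) (Λp ξ₁ ξ₂) 0 *ᵥ hp ξ₁ ξ₂ j = 0 := by
  have h := fromBlocks_zero_mulVec_sum_elim_eq_zero (Λp_mul_self ξ₁ ξ₂)
  fin_cases j
  · simpa [hp] using h e 0
  · simpa [hp] using h 0 e

theorem fromBlocks_Λm_mulVec_hm (ξ₁ ξ₂ : ℝ) (j : Fin 2) :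
    fromBlocks 0 (Λm ξ₁ ξ₂) (Λm ξ₁ ξ₂) 0 *ᵥ hm ξ₁ ξ₂ j = 0 := by
  have h := fromBlocks_zero_mulVec_sum_elim_eq_zero (Λm_mul_self ξ₁ ξ₂)
  fin_cases j
  · simpa [hm] using h e 0
  · simpa [hm] using h 0 e

/-- the functions `ψ₊,ⱼ(z) = h₊,ⱼ(ξ′)·exp(|ξ′|z)` and
`ψ₋,ⱼ(z) = h₋,ⱼ(ξ′)·exp(−|ξ′|z)` solve `(ξ₁α₁ + ξ₂α₂)ψ(z) + i·α₃·ψ′(z) = 0` on ℝ. -/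
theorem psi_solves_system (ξ₁ ξ₂ : ℝ) (j : Fin 2) :
    (∀ z : ℝ,
      ((ξ₁ : ℂ) • α1 + (ξ₂ : ℂ) • α2).mulVec
          ((fun t : ℝ => Real.exp (Real.sqrt (ξ₁ ^ 2 + ξ₂ ^ 2) * t) • hp ξ₁ ξ₂ j) z)
        + I • α3.mulVec
            (deriv (fun t : ℝ => Real.exp (Real.sqrt (ξ₁ ^ 2 + ξ₂ ^ 2) * t) • hp ξ₁ ξ₂ j) z)
        = 0) ∧
    (∀ z : ℝ,
      ((ξ₁ : ℂ) • α1 + (ξ₂ : ℂ) • α2).mulVec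
          ((fun t : ℝ => Real.exp (-(Real.sqrt (ξ₁ ^ 2 + ξ₂ ^ 2)) * t) • hm ξ₁ ξ₂ j) z)
        + I • α3.mulVec
            (deriv (fun t : ℝ => Real.exp (-(Real.sqrt (ξ₁ ^ 2 + ξ₂ ^ 2)) * t) • hm ξ₁ ξ₂ j) z)
        = 0) := by
  constructor <;> intro z <;> beta_reduce <;>
    rw [deriv_exp_mul_smul, mulVec_smul_add_I_smul_mulVec_smul,
      dirac_combination_eq_fromBlocks]
  · rw [← Λp, fromBlocks_Λp_mulVec_hp, smul_zero]
  · rw [← Λm_eq, fromBlocks_Λm_mulVec_hm, smul_zero]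
end
end

section
/- Let f : ℝ³ → ℂ be continuously differentiable and bounded, and suppose f is slowly oscillating at infinity, i.e. the gradient of f tends to 0 as ‖x‖ → ∞. Let (hₘ) be a sequence in ℝ³ with ‖hₘ‖ → ∞ and suppose there is a function f^h : ℝ³ → ℂ such that x ↦ f(x + hₘ) converges to f^h uniformly on every compact subset of ℝ³. Then f^h is a constant function. -/
open Filter Topology

noncomputable section

/-! By the mean value theorem, `‖f (x + hₘ) - f hₘ‖` is at most `‖x‖` times the supremum of
`‖Df‖` over the closed ball of radius `‖x‖` about `hₘ`; that ball escapes to infinity, so the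
bound tends to `0`. Hence `f^h x - f^h 0 = lim (f (x + hₘ) - f hₘ) = 0`. -/

open Bornology Metric

theorem eventually_closedBall_subset_of_mem_cobounded {α : Type*} [PseudoMetricSpace α]
    {s : Set α} (hs : s ∈ cobounded α) (r : ℝ) :
    ∀ᶠ y in cobounded α, closedBall y r ⊆ s := by
  have hbdd : IsBounded (cthickening r sᶜ) := (isBounded_compl_iff.mpr hs).cthickening
  filter_upwards [hbdd.compl] with y hy z hz
  by_contra hzs
  exact hy (mem_cthickening_of_dist_le y z r sᶜ hzs (dist_comm y z ▸ hz))

section SlowOscillation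

variable {E F : Type*} [NormedAddCommGroup E] [NormedSpace ℝ E]
  [NormedAddCommGroup F] [NormedSpace ℝ F]

theorem tendsto_apply_add_sub_apply_cobounded_of_tendsto_norm_fderiv {f : E → F}
    (hf : Differentiable ℝ f) (hso : Tendsto (‖fderiv ℝ f ·‖) (cobounded E) (𝓝 0)) (v : E) :
    Tendsto (fun y => f (y + v) - f y) (cobounded E) (𝓝 0) := by
  refine NormedAddGroup.tendsto_nhds_zero.mpr fun ε hε => ?_
  set δ := ε / (‖v‖ + 1)
  have hδv : δ * ‖v‖ < ε := by
    rw [div_mul_eq_mul_div, div_lt_iff₀ (by positivity)]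
    nlinarith [norm_nonneg v]
  have hsmall : {z | ‖fderiv ℝ f z‖ ≤ δ} ∈ cobounded E :=
    hso.eventually (ge_mem_nhds (by positivity))
  filter_upwards [eventually_closedBall_subset_of_mem_cobounded hsmall ‖v‖] with y hy
  have hmvt := (convex_closedBall y ‖v‖).norm_image_sub_le_of_norm_fderiv_le
    (fun z _ => hf z) (fun z hz => hy hz) (mem_closedBall_self (norm_nonneg v))
    (by simp : y + v ∈ closedBall y ‖v‖)
  rw [add_sub_cancel_left] at hmvt
  exact hmvt.trans_lt hδv

end SlowOscillation

theorem limit_function_of_slowly_oscillating_is_constant_general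
    (f : EuclideanSpace ℝ (Fin 3) → ℂ)
    (hf : ContDiff ℝ 1 f)
    (hso : Tendsto (fun x => ‖fderiv ℝ f x‖) (Bornology.cobounded (EuclideanSpace ℝ (Fin 3)))
      (𝓝 0))
    (hseq : ℕ → EuclideanSpace ℝ (Fin 3))
    (hseq_inf : Tendsto (fun m => ‖hseq m‖) atTop atTop)
    (fh : EuclideanSpace ℝ (Fin 3) → ℂ)
    (hconv : ∀ K : Set (EuclideanSpace ℝ (Fin 3)), IsCompact K →
      TendstoUniformlyOn (fun m x => f (x + hseq m)) fh atTop K) :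
    ∃ c : ℂ, ∀ x, fh x = c := by
  have hlim (x) : Tendsto (fun m => f (x + hseq m)) atTop (𝓝 (fh x)) :=
    (hconv {x} isCompact_singleton).tendsto_at rfl
  refine ⟨fh 0, fun x => sub_eq_zero.mp (tendsto_nhds_unique ((hlim x).sub (hlim 0)) ?_)⟩
  have hdiff := (tendsto_apply_add_sub_apply_cobounded_of_tendsto_norm_fderiv
    (hf.differentiable one_ne_zero) hso x).comp (tendsto_norm_atTop_iff_cobounded.mp hseq_inf)
  simpa only [Function.comp_def, zero_add, add_comm x] using hdiff

/-- if `f ∈ SO¹(ℝ³)` (bounded, continuously differentiable and slowly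
oscillating at infinity, i.e. its derivative tends to `0` at infinity) and the translates
`x ↦ f(x + hₘ)` along a sequence `hₘ → ∞` converge, uniformly on every compact set,
to a limit function `f^h`, then `f^h` is constant. -/
theorem limit_function_of_slowly_oscillating_is_constant
    (f : EuclideanSpace ℝ (Fin 3) → ℂ)
    (hf : ContDiff ℝ 1 f)
    (hfb : ∃ C : ℝ, ∀ x, ‖f x‖ ≤ C)
    (hso : Tendsto (fun x => ‖fderiv ℝ f x‖) (Bornology.cobounded (EuclideanSpace ℝ (Fin 3)))
      (𝓝 0))
    (hseq : ℕ → EuclideanSpace ℝ (Fin 3))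
    (hseq_inf : Tendsto (fun m => ‖hseq m‖) atTop atTop)
    (fh : EuclideanSpace ℝ (Fin 3) → ℂ)
    (hconv : ∀ K : Set (EuclideanSpace ℝ (Fin 3)), IsCompact K →
      TendstoUniformlyOn (fun m x => f (x + hseq m)) fh atTop K) :
    ∃ c : ℂ, ∀ x, fh x = c :=
  limit_function_of_slowly_oscillating_is_constant_general f hf hso hseq hseq_inf fh hconv
end
end
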